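/- Let n ≥ 1 be a natural number. The linear span of the set of functions S → ℝ of the form x ↦ MvPolynomial.eval (fun i => x i) p, where p ∈ MvPolynomial (Fin n) ℝ is harmonic and homogeneous of some degree a, is dense in L²(S, μ). -/

import Mathlib

/-!
Polynomials are dense in `Lᵖ` of any finite measure on the unit sphere: bounded continuous
functions are dense, and by Stone–Weierstrass every continuous function is a uniform limit of
polynomials on the compact sphere. On the other hand, write `r² = ∑ i, X i ^ 2`. On the
finite-dimensional space of homogeneous polynomials of degree `k`, `q ↦ Δ (r² q)` is injective,
hence surjective, so every homogeneous `p` of degree `a ≥ 2` splits as `p = h + r² q` with `q`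
homogeneous of degree `a - 2` chosen so that `Δ (r² q) = Δ p`, and `h` harmonic of degree `a`.
Since `r² = 1` on the sphere, induction on the degree shows that every polynomial agrees on the
sphere with a sum of harmonic homogeneous polynomials.

Finiteness of the Hausdorff measure of the sphere comes from covering it by two compact caps,
each a Lipschitz image of a ball in a hyperplane under inverse stereographic projection.
-/

open MvPolynomial MeasureTheory

/-- The `(n−1)`-dimensional Hausdorff measure restricted to the unit sphere
`S = {x : ‖x‖ = 1}` in `EuclideanSpace ℝ (Fin n)`. -/
noncomputable def sphereMeasure (n : ℕ) : Measure (EuclideanSpace ℝ (Fin n)) :=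
  (Measure.hausdorffMeasure ((n : ℝ) - 1)).restrict
    {x : EuclideanSpace ℝ (Fin n) | ‖x‖ = 1}

open Metric Module
open scoped ENNReal BoundedContinuousFunction

namespace MvPolynomial

variable {σ R : Type*} [Fintype σ]

section CommRing

variable [CommRing R]

noncomputable def laplacian : MvPolynomial σ R →ₗ[R] MvPolynomial σ R :=
  ∑ i, (pderiv i).toLinearMap ∘ₗ (pderiv i).toLinearMap

lemma laplacian_apply (p : MvPolynomial σ R) : laplacian p = ∑ i, pderiv i (pderiv i p) := by
  simp [laplacian]

noncomputable def radiusSq : MvPolynomial σ R := ∑ i, X i ^ 2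

lemma isHomogeneous_radiusSq : (radiusSq : MvPolynomial σ R).IsHomogeneous 2 :=
  IsHomogeneous.sum _ _ _ fun i _ => isHomogeneous_X_pow i 2

lemma pderiv_radiusSq (i : σ) : pderiv i (radiusSq : MvPolynomial σ R) = 2 * X i := by
  classical
  simp [radiusSq, pderiv_X, Pi.single_apply]

variable {p q : MvPolynomial σ R} {a k : ℕ}

lemma IsHomogeneous.laplacian (hp : p.IsHomogeneous a) :
    (MvPolynomial.laplacian p).IsHomogeneous (a - 2) := by
  rw [laplacian_apply]
  exact IsHomogeneous.sum _ _ _ fun i _ => by simpa [Nat.sub_sub] using hp.pderiv.pderiv (i := i)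

lemma IsHomogeneous.laplacian_eq_zero (hp : p.IsHomogeneous a) (ha : a < 2) :
    MvPolynomial.laplacian p = 0 := by
  rw [laplacian_apply]
  refine Finset.sum_eq_zero fun i _ => ?_
  have h0 : (pderiv i p).IsHomogeneous 0 := by
    simpa [show a - 1 = 0 by omega] using hp.pderiv (i := i)
  rw [totalDegree_eq_zero_iff_eq_C.1 ((totalDegree_zero_iff_isHomogeneous σ).2 h0), pderiv_C]

lemma IsHomogeneous.laplacian_radiusSq_mul (hq : q.IsHomogeneous k) :
    MvPolynomial.laplacian (radiusSq * q) =
      (2 * Fintype.card σ + 4 * k) • q + radiusSq * MvPolynomial.laplacian q := by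
  have hi (i : σ) : pderiv i (pderiv i (radiusSq * q)) =
      2 * q + 4 * (X i * pderiv i q) + radiusSq * pderiv i (pderiv i q) := by
    have h2 : pderiv i (2 : MvPolynomial σ R) = 0 := by
      simpa using (pderiv i).map_natCast 2
    simp only [Derivation.leibniz, pderiv_radiusSq, smul_eq_mul, map_add, pderiv_X_self, h2]
    ring
  simp only [laplacian_apply, hi, Finset.sum_add_distrib, ← Finset.mul_sum, hq.sum_X_mul_pderiv,
    Finset.sum_const, Finset.card_univ, nsmul_eq_mul]
  push_cast
  ring

lemma IsHomogeneous.laplacian_radiusSq_pow_succ_mul (hq : q.IsHomogeneous k) (j : ℕ) :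
    MvPolynomial.laplacian (radiusSq ^ (j + 1) * q) =
      (2 * (j + 1) * (Fintype.card σ + 2 * j + 2 * k)) • (radiusSq ^ j * q) +
        radiusSq ^ (j + 1) * MvPolynomial.laplacian q := by
  induction j with
  | zero =>
    rw [zero_add, pow_one, pow_zero, one_mul, hq.laplacian_radiusSq_mul]
    congr 2
    ring
  | succ j ih =>
    have hj : (radiusSq ^ (j + 1) * q).IsHomogeneous (2 * (j + 1) + k) :=
      (isHomogeneous_radiusSq.pow (j + 1)).mul hq
    rw [pow_succ', mul_assoc, hj.laplacian_radiusSq_mul, ih]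
    simp only [nsmul_eq_mul]
    push_cast
    ring

end CommRing

section Field

variable [Field R] [CharZero R] [Nonempty σ] {p q : MvPolynomial σ R} {a k : ℕ}

lemma radiusSq_ne_zero : (radiusSq : MvPolynomial σ R) ≠ 0 := by
  intro h
  have := congrArg (eval fun _ => (1 : R)) h
  simp [radiusSq] at this

/-- By `laplacian_radiusSq_pow_succ_mul`, `Δ (r^(2j+2) q) = 0` forces `q = r² q'` with
`Δ (r^(2j+4) q') = 0` and `deg q' = k - 2`, so the claim descends on the degree. -/
lemma IsHomogeneous.eq_zero_of_laplacian_radiusSq_pow_mul (hq : q.IsHomogeneous k) (j : ℕ)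
    (h : MvPolynomial.laplacian (radiusSq ^ (j + 1) * q) = 0) : q = 0 := by
  induction k using Nat.strong_induction_on generalizing q j with
  | _ k ih =>
  set d : ℕ := 2 * (j + 1) * (Fintype.card σ + 2 * j + 2 * k)
  have hd : (d : R) ≠ 0 := by
    have := Fintype.card_pos (α := σ)
    simp only [d, Nat.cast_ne_zero]
    positivity
  set q' := -(C (d : R)⁻¹ * MvPolynomial.laplacian q)
  have hq' : q'.IsHomogeneous (k - 2) := (hq.laplacian.C_mul _).neg
  have hqq' : q = radiusSq * q' := by
    rw [hq.laplacian_radiusSq_pow_succ_mul, nsmul_eq_mul] at h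
    have hsum : (d : MvPolynomial σ R) * q + radiusSq * MvPolynomial.laplacian q = 0 := by
      refine (mul_eq_zero.1 ?_).resolve_left (pow_ne_zero j radiusSq_ne_zero)
      linear_combination h
    have hinv : C (d : R)⁻¹ * (d : MvPolynomial σ R) = 1 := by
      rw [← map_natCast (C : R →+* MvPolynomial σ R) d, ← map_mul, inv_mul_cancel₀ hd, map_one]
    linear_combination C (d : R)⁻¹ * hsum - q * hinv
  rcases lt_or_ge k 2 with hk | hk
  · by_contra hq0
    have := hq.inj_right (hqq' ▸ isHomogeneous_radiusSq.mul hq') hq0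
    omega
  · rw [hqq', ih (k - 2) (by omega) hq' (j + 1) (by rwa [pow_succ, mul_assoc, ← hqq']), mul_zero]

lemma IsHomogeneous.exists_laplacian_radiusSq_mul_eq (hp : p.IsHomogeneous k) :
    ∃ q : MvPolynomial σ R, q.IsHomogeneous k ∧ MvPolynomial.laplacian (radiusSq * q) = p := by
  let L : homogeneousSubmodule σ R k →ₗ[R] homogeneousSubmodule σ R k :=
    (MvPolynomial.laplacian ∘ₗ LinearMap.mulLeft R radiusSq).restrict fun q hq => by
      simpa using (isHomogeneous_radiusSq.mul hq).laplacian
  have : Module.Finite R (homogeneousSubmodule σ R k) :=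
    Module.Finite.iff_fg.2 (homogeneousSubmodule_fg σ R k)
  have hL : Function.Injective L := by
    refine (injective_iff_map_eq_zero L).2 fun q hq => Subtype.ext ?_
    exact (mem_homogeneousSubmodule k _).1 q.2 |>.eq_zero_of_laplacian_radiusSq_pow_mul 0
      (by simpa [L] using congrArg Subtype.val hq)
  obtain ⟨q, hq⟩ := LinearMap.injective_iff_surjective.1 hL ⟨p, hp⟩
  exact ⟨q, q.2, congrArg Subtype.val hq⟩

lemma IsHomogeneous.exists_eq_add_radiusSq_mul (hp : p.IsHomogeneous a) (ha : 2 ≤ a) :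
    ∃ h q : MvPolynomial σ R, h.IsHomogeneous a ∧ MvPolynomial.laplacian h = 0 ∧
      q.IsHomogeneous (a - 2) ∧ p = h + radiusSq * q := by
  obtain ⟨q, hq, hLq⟩ := hp.laplacian.exists_laplacian_radiusSq_mul_eq
  refine ⟨p - radiusSq * q, q, hp.sub ?_, by rw [map_sub, hLq, sub_self], hq, by ring⟩
  simpa [Nat.add_sub_cancel' ha] using isHomogeneous_radiusSq.mul hq

end Field

end MvPolynomial

section Sphere

variable {E : Type*} [NormedAddCommGroup E] [InnerProductSpace ℝ E] [FiniteDimensional ℝ E]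
  [MeasurableSpace E] [BorelSpace E]

lemma IsCompact.hausdorffMeasure_lt_top_of_subset_sphere {K : Set E} (hK : IsCompact K)
    {m : ℕ} (hE : finrank ℝ E = m + 1) {v : E} (hv : ‖v‖ = 1) (hKS : K ⊆ sphere 0 1)
    (hvK : v ∉ K) : μH[m] K < ⊤ := by
  have : Fact (finrank ℝ E = m + 1) := ⟨hE⟩
  set F := (ℝ ∙ v)ᗮ
  have hF : finrank ℝ F = m :=
    Submodule.finrank_orthogonal_span_singleton (ne_zero_of_norm_ne_zero (by simp [hv]))
  set g : F → E := fun w => stereoInvFunAux v w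
  have hKv : K ⊆ {x | innerSL ℝ v x ≠ 1} := fun x hx h =>
    hvK (by rwa [(inner_eq_one_iff_of_norm_eq_one hv (by simpa using hKS hx)).1 h])
  obtain ⟨R, hR⟩ := (hK.image_of_continuousOn (continuousOn_stereoToFun.mono hKv)).isBounded
    |>.subset_closedBall 0
  have hKg : K ⊆ g '' closedBall 0 R := fun x hx =>
    ⟨stereoToFun v x, hR ⟨x, hx, rfl⟩,
      congrArg Subtype.val (stereo_left_inv hv (x := ⟨x, hKS hx⟩) (ne_of_mem_of_not_mem hx hvK))⟩
  obtain ⟨L, hL⟩ := (contDiff_stereoInvFunAux.comp F.subtypeL.contDiff).contDiffOn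
    |>.exists_lipschitzOnWith (f := g) one_ne_zero (convex_closedBall 0 R)
      (isCompact_closedBall 0 R)
  calc μH[m] K ≤ μH[m] (g '' closedBall 0 R) := measure_mono hKg
    _ ≤ L ^ (m : ℝ) * μH[m] (closedBall (0 : F) R) :=
      hL.hausdorffMeasure_image_le (Nat.cast_nonneg m)
    _ < ⊤ := by
      refine ENNReal.mul_lt_top
        (ENNReal.rpow_lt_top_of_nonneg (Nat.cast_nonneg m) ENNReal.coe_ne_top) ?_
      rw [← hF]
      exact (isCompact_closedBall 0 R).measure_lt_top

lemma hausdorffMeasure_sphere_lt_top : μH[(finrank ℝ E : ℝ) - 1] (sphere (0 : E) 1) < ⊤ := by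
  rcases Nat.eq_zero_or_pos (finrank ℝ E) with hE | hE
  · have : Subsingleton E := finrank_zero_iff.1 hE
    simp [sphere_eq_empty_of_subsingleton one_ne_zero]
  have : Nontrivial E := Module.nontrivial_of_finrank_pos hE
  obtain ⟨m, hE⟩ := Nat.exists_eq_succ_of_ne_zero hE.ne'
  obtain ⟨v, hv⟩ := exists_norm_eq E zero_le_one
  rw [hE, Nat.cast_succ, add_sub_cancel_right]
  have hcap (w : E) (hw : ‖w‖ = 1) : μH[m] (sphere 0 1 ∩ {x | inner ℝ w x ≤ 0}) < ⊤ := by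
    refine ((isCompact_sphere 0 1).inter_right (isClosed_le (by fun_prop) (by fun_prop)))
      |>.hausdorffMeasure_lt_top_of_subset_sphere hE hw Set.inter_subset_left fun h => ?_
    norm_num [hw] at h
  have hsplit : sphere (0 : E) 1 =
      (sphere 0 1 ∩ {x | inner ℝ v x ≤ 0}) ∪ (sphere 0 1 ∩ {x | inner ℝ (-v) x ≤ 0}) := by
    rw [← Set.inter_union_distrib_left]
    ext x
    simp [le_total]
  rw [hsplit]
  exact (measure_union_le _ _).trans_lt
    (ENNReal.add_lt_top.2 ⟨hcap v hv, hcap (-v) (by simpa using hv)⟩)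

end Sphere

instance isFiniteMeasure_sphereMeasure (n : ℕ) : IsFiniteMeasure (sphereMeasure n) where
  measure_univ_lt_top := by
    have h := hausdorffMeasure_sphere_lt_top (E := EuclideanSpace ℝ (Fin n))
    rw [finrank_euclideanSpace_fin] at h
    rw [sphereMeasure, Measure.restrict_apply_univ]
    convert h using 2
    ext x
    simp

section LpApprox

variable {α E : Type*} [TopologicalSpace α] [NormalSpace α] [MeasurableSpace α] [BorelSpace α]
  [NormedAddCommGroup E] [NormedSpace ℝ E] [SecondCountableTopologyEither α E]
  {μ : Measure α} [μ.WeaklyRegular] [IsFiniteMeasure μ] {p : ℝ≥0∞} [Fact (1 ≤ p)]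

lemma MeasureTheory.Lp.denseRange_of_ae_approx_boundedContinuous (hp : p ≠ ∞) {ι : Type*}
    {T : ι → Lp E p μ}
    (hT : ∀ (g : α →ᵇ E) (ε : ℝ), 0 < ε → ∃ i, ∀ᵐ x ∂μ, ‖T i x - g x‖ ≤ ε) :
    DenseRange T := by
  refine Metric.denseRange_iff.2 fun f r hr => ?_
  obtain ⟨g, hg⟩ := Metric.denseRange_iff.1
    (BoundedContinuousFunction.toLp_denseRange E μ ℝ hp) f (r / 2) (half_pos hr)
  set G := BoundedContinuousFunction.toLp p μ ℝ g
  set M : ℝ := (measureUnivNNReal μ : ℝ) ^ p.toReal⁻¹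
  obtain ⟨i, hi⟩ := hT g (r / 2 / (M + 1)) (by positivity)
  have hdist : dist G (T i) ≤ M * (r / 2 / (M + 1)) := by
    rw [dist_comm, _root_.dist_eq_norm]
    refine Lp.norm_le_of_ae_bound (by positivity) ?_
    filter_upwards [Lp.coeFn_sub (T i) G, BoundedContinuousFunction.coeFn_toLp p μ ℝ g, hi]
      with x hsub hG hx
    rwa [hsub, Pi.sub_apply, hG]
  have hM : M * (r / 2 / (M + 1)) < r / 2 := by
    rw [mul_div_assoc', div_lt_iff₀ (by positivity)]
    nlinarith [show 0 ≤ M by positivity]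
  exact ⟨i, by linarith [dist_triangle f G (T i)]⟩

end LpApprox

namespace MvPolynomial

section EvalLp

variable {ι : Type*}

noncomputable def evalContinuousMap : MvPolynomial ι ℝ →ₐ[ℝ] C(EuclideanSpace ℝ ι, ℝ) :=
  aeval fun i => ⟨fun x => x i, by fun_prop⟩

lemma evalContinuousMap_apply (P : MvPolynomial ι ℝ) (x : EuclideanSpace ℝ ι) :
    evalContinuousMap P x = eval (fun i => x i) P := by
  induction P using MvPolynomial.induction_on <;> simp_all [evalContinuousMap]

lemma separatesPoints_range_evalContinuousMap :
    (evalContinuousMap (ι := ι)).range.SeparatesPoints := by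
  intro x y hxy
  obtain ⟨i, hi⟩ : ∃ i, x i ≠ y i := by
    by_contra! h
    exact hxy (PiLp.ext h)
  exact ⟨_, ⟨evalContinuousMap (X i), ⟨X i, rfl⟩, rfl⟩, by simpa [evalContinuousMap_apply] using hi⟩

variable [Fintype ι] (p : ℝ≥0∞) {μ : Measure (EuclideanSpace ℝ ι)} [IsFiniteMeasure μ]

lemma memLp_evalContinuousMap (hμ : ∀ᵐ x ∂μ, ‖x‖ = 1) (P : MvPolynomial ι ℝ) :
    MemLp (evalContinuousMap P) p μ := by
  obtain ⟨C, hC⟩ := (isCompact_sphere (0 : EuclideanSpace ℝ ι) 1).exists_bound_of_continuousOn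
    (evalContinuousMap P).continuous.continuousOn
  refine MemLp.of_bound (evalContinuousMap P).continuous.aestronglyMeasurable C ?_
  filter_upwards [hμ] with x hx
  exact hC x (by simpa using hx)

noncomputable def evalLp (hμ : ∀ᵐ x ∂μ, ‖x‖ = 1) : MvPolynomial ι ℝ →ₗ[ℝ] Lp ℝ p μ where
  toFun P := (memLp_evalContinuousMap p hμ P).toLp _
  map_add' P Q := (MemLp.toLp_congr _ _ (.of_eq (by simp))).trans (MemLp.toLp_add _ _)
  map_smul' c P := (MemLp.toLp_congr _ _ (.of_eq (by simp))).trans (MemLp.toLp_const_smul _ _)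

variable {p} (hμ : ∀ᵐ x ∂μ, ‖x‖ = 1)

lemma coeFn_evalLp (P : MvPolynomial ι ℝ) :
    evalLp p hμ P =ᵐ[μ] fun x => eval (fun i => x i) P :=
  (MemLp.coeFn_toLp (memLp_evalContinuousMap p hμ P)).trans
    (.of_eq (_root_.funext (evalContinuousMap_apply P)))

lemma evalLp_radiusSq_mul (q : MvPolynomial ι ℝ) :
    evalLp p hμ (radiusSq * q) = evalLp p hμ q := by
  refine MemLp.toLp_congr (memLp_evalContinuousMap p hμ _) (memLp_evalContinuousMap p hμ _) ?_
  filter_upwards [hμ] with x hx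
  simp [evalContinuousMap_apply, radiusSq, ← EuclideanSpace.real_norm_sq_eq, hx]

lemma denseRange_evalLp [Fact (1 ≤ p)] (hp : p ≠ ∞) : DenseRange (evalLp p hμ) := by
  refine Lp.denseRange_of_ae_approx_boundedContinuous hp fun g ε hε => ?_
  obtain ⟨_, ⟨P, rfl⟩, hP⟩ :=
    ContinuousMap.exists_mem_subalgebra_near_continuous_of_isCompact_of_separatesPoints
      separatesPoints_range_evalContinuousMap g.toContinuousMap (isCompact_sphere 0 1) hε
  refine ⟨P, ?_⟩
  filter_upwards [coeFn_evalLp hμ P, hμ] with x hx hx1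
  rw [hx]
  simpa [evalContinuousMap_apply] using (hP x (by simpa using hx1)).le

end EvalLp

end MvPolynomial

section SphericalHarmonics

variable {ι : Type*} [Fintype ι] {p : ℝ≥0∞} {μ : Measure (EuclideanSpace ℝ ι)}

variable (p μ) in
def sphericalHarmonics : Set (Lp ℝ p μ) :=
  {f | ∃ (a : ℕ) (P : MvPolynomial ι ℝ), P.IsHomogeneous a ∧ laplacian P = 0 ∧
    ∀ᵐ x ∂μ, f x = eval (fun i => x i) P}

variable [Nonempty ι] [IsFiniteMeasure μ] (hμ : ∀ᵐ x ∂μ, ‖x‖ = 1)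

lemma MvPolynomial.IsHomogeneous.evalLp_mem_span_sphericalHarmonics {P : MvPolynomial ι ℝ}
    {a : ℕ} (hP : P.IsHomogeneous a) :
    evalLp p hμ P ∈ Submodule.span ℝ (sphericalHarmonics p μ) := by
  induction a using Nat.strong_induction_on generalizing P with
  | _ a ih =>
  by_cases ha : a < 2
  · exact Submodule.subset_span ⟨a, P, hP, hP.laplacian_eq_zero ha, coeFn_evalLp hμ P⟩
  obtain ⟨h, q, hh, hΔh, hq, rfl⟩ := hP.exists_eq_add_radiusSq_mul (by omega)
  rw [map_add, evalLp_radiusSq_mul]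
  exact add_mem (Submodule.subset_span ⟨a, h, hh, hΔh, coeFn_evalLp hμ h⟩) (ih _ (by omega) hq)

lemma MvPolynomial.evalLp_mem_span_sphericalHarmonics (P : MvPolynomial ι ℝ) :
    evalLp p hμ P ∈ Submodule.span ℝ (sphericalHarmonics p μ) := by
  rw [← sum_homogeneousComponent P, map_sum]
  exact Submodule.sum_mem _ fun a _ =>
    (homogeneousComponent_isHomogeneous a P).evalLp_mem_span_sphericalHarmonics hμ

theorem dense_span_sphericalHarmonics [Fact (1 ≤ p)] (hμ : ∀ᵐ x ∂μ, ‖x‖ = 1) (hp : p ≠ ∞) :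
    Dense (Submodule.span ℝ (sphericalHarmonics p μ) : Set (Lp ℝ p μ)) :=
  (denseRange_evalLp hμ hp).mono
    (Set.range_subset_iff.2 (evalLp_mem_span_sphericalHarmonics hμ))

end SphericalHarmonics

/-- The linear span of (classes of) restrictions to the unit sphere of harmonic homogeneous
polynomials is dense in `L²(S, μ)`, where `μ` is the `(n−1)`-dimensional Hausdorff measure on
the sphere `S = S^{n-1}`. -/
theorem span_harmonic_dense_in_L2_sphere (n : ℕ) (hn : 1 ≤ n) :
    Dense ((Submodule.span ℝ
      {f : Lp ℝ 2 (sphereMeasure n) |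
        ∃ (a : ℕ) (p : MvPolynomial (Fin n) ℝ),
          p ∈ homogeneousSubmodule (Fin n) ℝ a ∧
          (∑ i, pderiv i (pderiv i p)) = 0 ∧
          ∀ᵐ x ∂(sphereMeasure n),
            (f : EuclideanSpace ℝ (Fin n) → ℝ) x =
              MvPolynomial.eval (fun i => x i) p} :
      Set (Lp ℝ 2 (sphereMeasure n)))) := by
  have : Nonempty (Fin n) := Fin.pos_iff_nonempty.1 hn
  have hμ : ∀ᵐ x ∂sphereMeasure n, ‖x‖ = 1 :=
    ae_restrict_mem (isClosed_eq continuous_norm continuous_const).measurableSet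
  convert dense_span_sphericalHarmonics hμ ENNReal.ofNat_ne_top using 4
  ext f
  simp [sphericalHarmonics, laplacian_apply]
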